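/- Let q = e^{πi/m} with m an even positive integer, and let n be an odd positive integer with m ≥ n. Then the odd orthogonal character so^{odd}_{((m-n)/2, ..., (m-n)/2)} (rectangular shape with n equal parts (m-n)/2) evaluated at (-q^{n-1}, -q^{n-3}, ..., -q^{-n+3}, -q^{-n+1}) equals 0. -/

import Mathlib

/-!
On the slice `y_{(n-1)/2} = i` every column exponent `m + n - 1 - 2t` of the numerator is even,
so that row of the numerator determinant vanishes, and `f = 0` wherever the denominator does
not. The target point lies on this slice, and although the denominator vanishes there, it is a
limit of points of the slice where it does not: scaling the other coordinates by distinct real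
factors `1 + s δ_h > 1` makes the values `y_h² + y_h⁻²` pairwise distinct. Continuity of `f`
then gives `f = 0` at the target. Nonvanishing of the denominator comes from factoring out
`∏ (y_h - y_h⁻¹)`, which leaves a Vandermonde determinant in the variables `y_h² + y_h⁻²`.
-/

open Polynomial Matrix Function Filter Topology

/-- The fourth-kind Chebyshev polynomial `W_u`, rescaled to `W_u (X / 2)`. -/
noncomputable def chebyshevW (R : Type*) [CommRing R] : ℕ → R[X]
  | 0 => 1
  | 1 => X + 1
  | u + 2 => X * chebyshevW R (u + 1) - chebyshevW R u

section chebyshevW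

variable {R : Type*} [CommRing R] [Nontrivial R]

theorem natDegree_chebyshevW : ∀ u, (chebyshevW R u).natDegree = u
  | 0 => natDegree_one
  | 1 => natDegree_X_add_C 1
  | u + 2 => by
    have hX : (X * chebyshevW R (u + 1)).natDegree = u + 2 := by
      have hne : chebyshevW R (u + 1) ≠ 0 := fun h0 => by
        simpa [h0] using (natDegree_chebyshevW (u + 1) : (chebyshevW R (u + 1)).natDegree = _)
      rw [natDegree_X_mul hne, natDegree_chebyshevW]
    rw [chebyshevW, natDegree_sub_eq_left_of_natDegree_lt (by rw [hX, natDegree_chebyshevW]; omega),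
      hX]

theorem chebyshevW_monic : ∀ u, (chebyshevW R u).Monic
  | 0 => monic_one
  | 1 => monic_X_add_C 1
  | u + 2 => by
    refine (monic_X.mul (chebyshevW_monic (u + 1))).sub_of_left (degree_lt_degree ?_)
    rw [monic_X.natDegree_mul (chebyshevW_monic (u + 1)), natDegree_X, natDegree_chebyshevW,
      natDegree_chebyshevW]
    omega

end chebyshevW

theorem chebyshevW_eval_mul {K : Type*} [Field K] {y : K} (hy : y ≠ 0) :
    ∀ u, (chebyshevW K u).eval (y ^ 2 + (y ^ 2)⁻¹) * (y - y⁻¹) =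
      y ^ (2 * u + 1) - (y ^ (2 * u + 1))⁻¹
  | 0 => by simp [chebyshevW]
  | 1 => by
    simp only [chebyshevW, eval_add, eval_X, eval_one]
    field_simp
    ring
  | u + 2 => by
    calc (chebyshevW K (u + 2)).eval (y ^ 2 + (y ^ 2)⁻¹) * (y - y⁻¹)
        = (y ^ 2 + (y ^ 2)⁻¹) *
              ((chebyshevW K (u + 1)).eval (y ^ 2 + (y ^ 2)⁻¹) * (y - y⁻¹)) -
            (chebyshevW K u).eval (y ^ 2 + (y ^ 2)⁻¹) * (y - y⁻¹) := by
          simp only [chebyshevW, eval_sub, eval_mul, eval_X]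
          ring
      _ = _ := by
          rw [chebyshevW_eval_mul hy (u + 1), chebyshevW_eval_mul hy u]
          field_simp
          ring

theorem eq_or_mul_eq_one_of_add_inv_eq_add_inv {K : Type*} [Field K] {a b : K} (ha : a ≠ 0)
    (hb : b ≠ 0) (h : a + a⁻¹ = b + b⁻¹) : a = b ∨ a * b = 1 := by
  have : (a - b) * (a * b - 1) = 0 := by
    field_simp at h
    linear_combination h
  rcases mul_eq_zero.1 this with h | h
  · exact .inl (sub_eq_zero.1 h)
  · exact .inr (sub_eq_zero.1 h)

/-- Regular points of the maximal torus of type `B`, in the coordinates `x_h = y_h²`: the odd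
orthogonal Weyl denominator is nonzero exactly there. -/
def IsBRegular {ι K : Type*} [Field K] (y : ι → K) : Prop :=
  (∀ h, y h ≠ 0) ∧ (∀ h, y h ^ 2 ≠ 1) ∧ Injective fun h => y h ^ 2 + (y h ^ 2)⁻¹

theorem det_zpow_sub_zpow_neg_ne_zero {K : Type*} [Field K] {N : ℕ} {y : Fin N → K}
    (hy : IsBRegular y) :
    det (of fun h t : Fin N =>
      y h ^ ((2 * (N : ℤ) - 1 - 2 * (t : ℕ) : ℤ)) -
        y h ^ ((-(2 * (N : ℤ) - 1 - 2 * (t : ℕ)) : ℤ))) ≠ 0 := by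
  obtain ⟨hy0, hy1, hw⟩ := hy
  set w : Fin N → K := fun h => y h ^ 2 + (y h ^ 2)⁻¹
  set M : Matrix (Fin N) (Fin N) K := of fun h t => (chebyshevW K t).eval (w h)
  have hentry : (of fun h t : Fin N =>
      y h ^ ((2 * (N : ℤ) - 1 - 2 * (t : ℕ) : ℤ)) -
        y h ^ ((-(2 * (N : ℤ) - 1 - 2 * (t : ℕ)) : ℤ))) =
      of fun h t => (y h - (y h)⁻¹) * M.submatrix id Fin.revPerm h t := by
    ext h t
    have he : (2 * (N : ℤ) - 1 - 2 * (t : ℕ) : ℤ) =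
        ((2 * (Fin.rev t : ℕ) + 1 : ℕ) : ℤ) := by
      rw [Fin.val_rev]
      have := t.isLt
      push_cast [Nat.cast_sub (by omega : (t : ℕ) + 1 ≤ N)]
      ring
    rw [of_apply, of_apply, he, _root_.zpow_neg, zpow_natCast]
    exact (chebyshevW_eval_mul (hy0 h) _).symm.trans (mul_comm _ _)
  have hsub : ∀ h, y h - (y h)⁻¹ ≠ 0 := fun h hz =>
    hy1 h (by rw [sq, mul_eq_one_iff_eq_inv₀ (hy0 h)]; exact sub_eq_zero.1 hz)
  rw [hentry, det_mul_column]
  refine mul_ne_zero (Finset.prod_ne_zero_iff.2 fun h _ => hsub h) ?_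
  rw [det_permute', ← det_eval_matrixOfPolynomials_eq_det_vandermonde w (fun t => chebyshevW K t)
    (fun t => natDegree_chebyshevW t) (fun t => chebyshevW_monic t)]
  exact mul_ne_zero ((Units.isUnit _).map (Int.castRingHom K)).ne_zero
    (det_vandermonde_ne_zero_iff.2 hw)

theorem zpow_sub_zpow_neg_eq_zero {K : Type*} [DivisionRing K] {x : K} (hx : x⁻¹ = -x) {e : ℤ}
    (he : Even e) : x ^ e - x ^ (-e) = 0 := by
  rw [_root_.zpow_neg, ← _root_.inv_zpow, hx, he.neg_zpow, sub_self]

theorem det_zpow_sub_zpow_neg_eq_zero {K : Type*} [Field K] {N : ℕ} {y : Fin N → K}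
    {h₀ : Fin N} (hy : (y h₀)⁻¹ = -y h₀) {e : Fin N → ℤ} (he : ∀ t, Even (e t)) :
    det (of fun h t => y h ^ e t - y h ^ (-e t)) = 0 :=
  det_eq_zero_of_row_eq_zero h₀ fun t => zpow_sub_zpow_neg_eq_zero hy (he t)

theorem isBRegular_of_norm {ι K : Type*} [NormedField K] {y : ι → K}
    (hinj : Injective fun h => ‖y h‖) (hge : ∀ h, 1 ≤ ‖y h‖)
    (hsq : ∀ h, ‖y h‖ = 1 → y h ^ 2 ≠ 1) :
    IsBRegular y := by
  have hy0 : ∀ h, y h ≠ 0 := fun h => norm_pos_iff.1 (one_pos.trans_le (hge h))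
  refine ⟨hy0, fun h => ?_, fun p q hpq => ?_⟩
  · rcases (hge h).eq_or_lt with h1 | h1
    · exact hsq h h1.symm
    · intro hsq1
      have := congrArg norm hsq1
      rw [norm_pow, norm_one] at this
      nlinarith
  · have hp := hge p
    have hq := hge q
    apply hinj
    rcases eq_or_mul_eq_one_of_add_inv_eq_add_inv (pow_ne_zero 2 (hy0 p)) (pow_ne_zero 2 (hy0 q))
      hpq with h | h
    · have := congrArg norm h
      rw [norm_pow, norm_pow] at this
      exact (pow_left_inj₀ (norm_nonneg _) (norm_nonneg _) two_ne_zero).1 this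
    · have := congrArg norm h
      rw [norm_mul, norm_pow, norm_pow, norm_one, ← mul_pow,
        pow_eq_one_iff_of_nonneg (by positivity) two_ne_zero] at this
      change ‖y p‖ = ‖y q‖
      nlinarith

theorem mem_closure_isBRegular {N : ℕ} {u : Fin N → ℂ} (hu : ∀ h, ‖u h‖ = 1)
    {h₀ : Fin N} (hu₀ : u h₀ ^ 2 ≠ 1) :
    u ∈ closure {y | y h₀ = u h₀ ∧ IsBRegular y} := by
  set δ : Fin N → ℕ := fun h => Equiv.swap h₀ ⟨0, h₀.pos⟩ h
  have hδ : Injective δ := Fin.val_injective.comp (Equiv.injective _)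
  have hδ₀ : δ h₀ = 0 := by simp [δ]
  set y : ℝ → Fin N → ℂ := fun s h => u h * ((1 + s * δ h : ℝ) : ℂ)
  have hy_norm : ∀ s, 0 ≤ s → ∀ h, ‖y s h‖ = 1 + s * δ h := fun s hs h => by
    rw [norm_mul, hu, one_mul, Complex.norm_real, Real.norm_of_nonneg (by positivity)]
  have hlim : Tendsto y (𝓝[>] 0) (𝓝 u) := by
    refine tendsto_nhdsWithin_of_tendsto_nhds ?_
    convert (show Continuous y by fun_prop).tendsto 0
    simp [y]
  refine mem_closure_of_tendsto hlim (eventually_mem_nhdsWithin.mono fun s (hs : 0 < s) => ?_)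
  refine ⟨by simp [y, hδ₀],
    isBRegular_of_norm (fun p q hpq => hδ ?_) (fun h => ?_) (fun h h1 => ?_)⟩
  · simp only [hy_norm s hs.le, add_right_inj, mul_right_inj' hs.ne'] at hpq
    exact_mod_cast hpq
  · rw [hy_norm s hs.le]
    exact le_add_of_nonneg_right (by positivity)
  · rw [hy_norm s hs.le, add_eq_left, mul_eq_zero, Nat.cast_eq_zero] at h1
    obtain rfl : h = h₀ := hδ (h1.resolve_left hs.ne' |>.trans hδ₀.symm)
    simpa [y, hδ₀] using hu₀

theorem stmt_14_general (m n : ℕ) (hm : 0 < m)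
    (hme : Even m) (hno : Odd n)
    (f : (Fin n → ℂ) → ℂ)
    (hf_cont : ContinuousOn f {y : Fin n → ℂ | ∀ i, y i ≠ 0})
    (hf_eq : ∀ y : Fin n → ℂ, (∀ i, y i ≠ 0) →
      Matrix.det (Matrix.of fun h t : Fin n =>
          y h ^ (((m : ℤ) + n - 1 - 2 * (t : ℕ) : ℤ)) -
            y h ^ ((-((m : ℤ) + n - 1 - 2 * (t : ℕ)) : ℤ))) =
        f y * Matrix.det (Matrix.of fun h t : Fin n =>
          y h ^ ((2 * (n : ℤ) - 1 - 2 * (t : ℕ) : ℤ)) -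
            y h ^ ((-(2 * (n : ℤ) - 1 - 2 * (t : ℕ)) : ℤ)))) :
    f (fun h => Complex.exp
        (Real.pi * Complex.I * ((m : ℂ) + n - 1 - 2 * (h : ℕ)) / (2 * m))) = 0 := by
  obtain ⟨k, hk⟩ := hno
  set u : Fin n → ℂ := fun h =>
    Complex.exp (Real.pi * Complex.I * ((m : ℂ) + n - 1 - 2 * (h : ℕ)) / (2 * m))
  set h₀ : Fin n := ⟨k, by omega⟩
  have hu : ∀ h, ‖u h‖ = 1 := fun h => by
    convert Complex.norm_exp_ofReal_mul_I (Real.pi * (m + n - 1 - 2 * (h : ℕ)) / (2 * m)) using 3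
    push_cast
    ring
  have hu₀ : u h₀ = Complex.I := by
    have hm' : (m : ℂ) ≠ 0 := by exact_mod_cast hm.ne'
    have hn' : (n : ℂ) = 2 * k + 1 := by exact_mod_cast hk
    rw [← Complex.exp_pi_div_two_mul_I]
    simp only [u, h₀, hn']
    congr 1
    field_simp
    ring
  have hzero : ∀ y ∈ {y | y h₀ = u h₀ ∧ IsBRegular y}, f y = 0 := by
    rintro y ⟨hy₀, hy⟩
    have heven : ∀ t : Fin n, Even ((m : ℤ) + n - 1 - 2 * (t : ℕ)) := fun t => by
      obtain ⟨a, ha⟩ := hme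
      exact ⟨a + k - t, by omega⟩
    have hy₀' : (y h₀)⁻¹ = -y h₀ := by rw [hy₀, hu₀, Complex.inv_I]
    have := (hf_eq y hy.1).symm.trans (det_zpow_sub_zpow_neg_eq_zero hy₀' heven)
    exact (mul_eq_zero.1 this).resolve_right (det_zpow_sub_zpow_neg_ne_zero hy)
  have hcont : ContinuousWithinAt f {y | y h₀ = u h₀ ∧ IsBRegular y} u :=
    (hf_cont u fun h => norm_ne_zero_iff.1 (by simp [hu])).mono fun y hy => hy.2.1
  have hu₀_sq : u h₀ ^ 2 ≠ 1 := by rw [hu₀, Complex.I_sq]; norm_num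
  have := hcont.mem_closure_image (mem_closure_isBRegular hu hu₀_sq)
  exact closure_minimal (Set.image_subset_iff.2 hzero : f '' _ ⊆ {0}) isClosed_singleton this

/-- Part (so2b) of Lemma C2: the odd orthogonal character of rectangular shape
`(((m-n)/2)^n)` evaluated at `(-q^{n-1}, -q^{n-3}, …, -q^{-n+1})`, `q = e^{πi/m}`,
vanishes when `m` is even and `n` is odd (`m ≥ n`). We work with square roots `y`
of the variables (`x_h = y_h²`), so the character is the unique function `f`,
continuous on nonzero arguments, with
`det(y_h^{m+n-2t+1} - y_h^{-(m+n-2t+1)}) = f(y) · det(y_h^{2n-2t+1} - y_h^{-(2n-2t+1)})`.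
Its value at `y_h = e^{πi(m+n+1-2h)/(2m)}` (a square root of `-q^{n+1-2h}`) is `0`. -/
theorem stmt_14 (m n : ℕ) (hm : 0 < m) (hn : 0 < n) (hmn : n ≤ m)
    (hme : Even m) (hno : Odd n)
    (f : (Fin n → ℂ) → ℂ)
    (hf_cont : ContinuousOn f {y : Fin n → ℂ | ∀ i, y i ≠ 0})
    (hf_eq : ∀ y : Fin n → ℂ, (∀ i, y i ≠ 0) →
      Matrix.det (Matrix.of fun h t : Fin n =>
          y h ^ (((m : ℤ) + n - 1 - 2 * (t : ℕ) : ℤ)) -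
            y h ^ ((-((m : ℤ) + n - 1 - 2 * (t : ℕ)) : ℤ))) =
        f y * Matrix.det (Matrix.of fun h t : Fin n =>
          y h ^ ((2 * (n : ℤ) - 1 - 2 * (t : ℕ) : ℤ)) -
            y h ^ ((-(2 * (n : ℤ) - 1 - 2 * (t : ℕ)) : ℤ)))) :
    f (fun h => Complex.exp
        (Real.pi * Complex.I * ((m : ℂ) + n - 1 - 2 * (h : ℕ)) / (2 * m))) = 0 :=
  stmt_14_general m n hm hme hno f hf_cont hf_eq
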